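/- Let M be a popular matching of a CHA instance I with switching graph G_M. If h is a saturated vertex of G_M all of whose outgoing edges have weight −1, then h has no incoming edge of weight −1. -/

import Mathlib

/-- A Capacitated House Allocation (CHA) instance: agents `A`, houses `H`, a capacity
function `cap : H → ℤ_{>0}`, and for each agent a strict preference order (lower rank
means more preferred) over its adjacent houses, augmented with a unique last-resort
house `l(a)` of capacity `1` and lowest preference, appearing only on `a`'s list. -/
structure CHAInstance (A H : Type*) where
  adj : A → H → Prop
  rank : A → H → ℕ
  rank_strict : ∀ a h h', adj a h → adj a h' → rank a h = rank a h' → h = h'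
  cap : H → ℕ
  cap_pos : ∀ h, 0 < cap h
  lastResort : A → H
  lastResort_injective : Function.Injective lastResort
  lastResort_adj : ∀ a, adj a (lastResort a)
  lastResort_worst : ∀ a h, adj a h → h ≠ lastResort a → rank a h < rank a (lastResort a)
  lastResort_only : ∀ a a', adj a' (lastResort a) → a' = a
  lastResort_cap : ∀ a, cap (lastResort a) = 1

namespace CHAInstance

variable {A H : Type*}

/-- A matching of the CHA instance `I`: each agent is matched to at most one adjacent
house, and each house `h` is matched to at most `cap h` agents. -/
def IsMatching (I : CHAInstance A H) (M : Set (A × H)) : Prop :=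
  (∀ p ∈ M, I.adj p.1 p.2) ∧ (∀ p ∈ M, ∀ q ∈ M, p.1 = q.1 → p = q) ∧
    (∀ h : H, {a | (a, h) ∈ M}.ncard ≤ I.cap h)

/-- Agent `a` prefers matching `M` to matching `M'`: `a` is matched in `M` and either
unmatched in `M'`, or strictly prefers its house in `M` to its house in `M'`. -/
def Prefers (I : CHAInstance A H) (M M' : Set (A × H)) (a : A) : Prop :=
  ∃ h, (a, h) ∈ M ∧ ∀ h', (a, h') ∈ M' → I.rank a h < I.rank a h'

/-- `M` is more popular than `M'`. -/
def MorePopular [Fintype A] (I : CHAInstance A H) (M M' : Set (A × H)) : Prop :=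
  Nat.card {a | Prefers I M M' a} > Nat.card {a | Prefers I M' M a}

/-- `M` is a popular matching of `I`. -/
def IsPopular [Fintype A] (I : CHAInstance A H) (M : Set (A × H)) : Prop :=
  I.IsMatching M ∧ ∀ M', I.IsMatching M' → ¬ MorePopular I M' M

/-- `h = f(a)`: house `h` is the (unique) first choice of agent `a`. -/
def IsFirstChoice (I : CHAInstance A H) (a : A) (h : H) : Prop :=
  I.adj a h ∧ ∀ h', I.adj a h' → I.rank a h ≤ I.rank a h'

/-- `f(h)`: the set of agents whose first choice is `h`. -/
def fSet (I : CHAInstance A H) (h : H) : Set A := {a | IsFirstChoice I a h}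

/-- `h` is an `f`-house if it is the first choice of some agent. -/
def IsFHouse (I : CHAInstance A H) (h : H) : Prop := ∃ a, IsFirstChoice I a h

/-- The defining condition for `s(a)`: `h` is not an `f`-house, or `h` is an `f`-house
with `h ≠ f(a)` and `|f(h)| < c(h)`. -/
def SCond (I : CHAInstance A H) (a : A) (h : H) : Prop :=
  ¬ IsFHouse I h ∨ (¬ IsFirstChoice I a h ∧ (fSet I h).ncard < I.cap h)

/-- `h = s(a)`: house `h` is the highest-ranked house on `a`'s preference list
satisfying `SCond`. -/
def IsSecondChoice (I : CHAInstance A H) (a : A) (h : H) : Prop :=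
  I.adj a h ∧ SCond I a h ∧ ∀ h', I.adj a h' → SCond I a h' → I.rank a h ≤ I.rank a h'

/-- The switching graph `G_M` of `I` with respect to a popular matching `M`:
`SwEdge I M a src tgt w` says that agent `a` contributes the directed edge from
`src = M(a)` to `tgt`, the other element of `{f(a), s(a)}`, with weight
`w = -1` if `M(a) = f(a)` and `w = +1` otherwise. -/
def SwEdge (I : CHAInstance A H) (M : Set (A × H)) (a : A) (src tgt : H) (w : ℤ) :
    Prop :=
  (a, src) ∈ M ∧
    ((IsFirstChoice I a src ∧ IsSecondChoice I a tgt ∧ w = -1) ∨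
     (IsSecondChoice I a src ∧ IsFirstChoice I a tgt ∧ w = 1))

/-- The unsaturation degree `u_M(h) = c(h) - |M(h)|` of a house `h`. -/
noncomputable def unsatDeg (I : CHAInstance A H) (M : Set (A × H)) (h : H) : ℕ :=
  I.cap h - {a | (a, h) ∈ M}.ncard

/-- A house is saturated if its unsaturation degree is `0`. -/
def Saturated (I : CHAInstance A H) (M : Set (A × H)) (h : H) : Prop :=
  unsatDeg I M h = 0

end CHAInstance

/-!
An edge of weight `-1` into `h` comes from an agent `a` with `M(a) = f(a)` and `s(a) = h`, so `h`
is not an `f`-house or has fewer than `c(h)` first-choosers. Since `h` is full, it then holds an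
agent `b` with `f(b) ≠ h`, for whom `h` is eligible as `s(b)`. In a popular matching no agent is
matched worse than a house `y` eligible as its `s`-house: otherwise `b` moves to `y`, evicting an
occupant `c` with `f(c) ≠ y` to `f(c)`, which evicts an occupant `d` to its last resort (or `d = b`
and `b`, `c` swap); two agents gain and at most one loses. Hence `h = s(b)`, and `b` contributes
the edge `h → f(b)` of weight `+1`.
-/

namespace CHAInstance

variable {A H : Type*} {I : CHAInstance A H} {M : Set (A × H)}

variable (I) in
theorem exists_isFirstChoice (a : A) : ∃ h, I.IsFirstChoice a h := by
  obtain ⟨h, hadj, hmin⟩ := (InvImage.wf (I.rank a) wellFounded_lt).has_min {h | I.adj a h}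
    ⟨I.lastResort a, I.lastResort_adj a⟩
  exact ⟨h, hadj, fun h' hadj' => not_lt.mp (hmin h' hadj')⟩

theorem IsFirstChoice.rank_lt {a : A} {g h : H} (hg : I.IsFirstChoice a g) (hadj : I.adj a h)
    (hh : ¬ I.IsFirstChoice a h) : I.rank a g < I.rank a h :=
  (hg.2 h hadj).lt_of_ne fun heq => hh (I.rank_strict a g h hg.1 hadj heq ▸ hg)

theorem SCond.of_not_isFirstChoice {a b : A} {h : H} (hsc : I.SCond a h)
    (hb : ¬ I.IsFirstChoice b h) : I.SCond b h :=
  hsc.imp_right fun hlt => ⟨hb, hlt.2⟩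

theorem exists_mem_not_isFirstChoice_of_sCond [Finite A] {a : A} {h : H} (hsc : I.SCond a h)
    (hfull : I.cap h ≤ {e | (e, h) ∈ M}.ncard) :
    ∃ b, (b, h) ∈ M ∧ ¬ I.IsFirstChoice b h := by
  by_contra! hall
  rcases hsc with hnf | ⟨-, hlt⟩
  · obtain ⟨b, hb⟩ := Set.nonempty_of_ncard_ne_zero (hfull.trans_lt' (I.cap_pos h)).ne'
    exact hnf ⟨b, hall b hb⟩
  · exact (hlt.trans_le hfull).not_ge (Set.ncard_le_ncard hall)

theorem IsMatching.snd_eq (hM : I.IsMatching M) {a : A} {x y : H} (hx : (a, x) ∈ M)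
    (hy : (a, y) ∈ M) : x = y :=
  congrArg Prod.snd (hM.2.1 _ hx _ hy rfl)

theorem Prefers.not_prefers {M' : Set (A × H)} {a : A} (h : I.Prefers M M' a) :
    ¬ I.Prefers M' M a := by
  rintro ⟨y, hy, hy'⟩
  obtain ⟨x, hx, hx'⟩ := h
  exact lt_asymm (hx' y hy) (hy' x hx)

def reassign (M : Set (A × H)) (T : Set A) (f : A → H) : Set (A × H) :=
  {p | (p ∈ M ∧ p.1 ∉ T) ∨ (p.1 ∈ T ∧ p.2 = f p.1)}

variable {T : Set A} {f : A → H}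

theorem ncard_occupants_reassign_le [Finite A] (hM : I.IsMatching M) (hinj : T.InjOn f)
    (hroom : ∀ a ∈ T, {e | (e, f a) ∈ M}.ncard < I.cap (f a) ∨ ∃ a' ∈ T, (a', f a) ∈ M)
    (w : H) : {e | (e, w) ∈ reassign M T f}.ncard ≤ I.cap w := by
  by_cases hw : ∃ a ∈ T, f a = w
  · obtain ⟨a, haT, rfl⟩ := hw
    have hsub : {e | (e, f a) ∈ reassign M T f} ⊆ insert a ({e | (e, f a) ∈ M} \ T) := by
      rintro e (⟨he, heT⟩ | ⟨heT, hfe⟩)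
      · exact Or.inr ⟨he, heT⟩
      · exact Or.inl (hinj heT haT hfe.symm)
    have hstay : ({e | (e, f a) ∈ M} \ T).ncard + 1 ≤ I.cap (f a) := by
      rcases hroom a haT with hlt | ⟨a', ha'T, ha'⟩
      · exact Nat.succ_le_of_lt ((Set.ncard_le_ncard Set.sdiff_subset).trans_lt hlt)
      · exact Nat.succ_le_of_lt ((Set.ncard_lt_ncard
          (Set.sdiff_ssubset_left_iff.mpr ⟨a', ha', ha'T⟩)).trans_le (hM.2.2 _))
    exact (Set.ncard_le_ncard hsub).trans ((Set.ncard_insert_le _ _).trans hstay)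
  · push Not at hw
    refine (Set.ncard_le_ncard ?_).trans (hM.2.2 w)
    rintro e (⟨he, -⟩ | ⟨heT, hfe⟩)
    · exact he
    · exact absurd hfe.symm (hw e heT)

theorem IsMatching.reassign [Finite A] (hM : I.IsMatching M) (hadj : ∀ a ∈ T, I.adj a (f a))
    (hinj : T.InjOn f)
    (hroom : ∀ a ∈ T, {e | (e, f a) ∈ M}.ncard < I.cap (f a) ∨ ∃ a' ∈ T, (a', f a) ∈ M) :
    I.IsMatching (reassign M T f) := by
  refine ⟨?_, ?_, ncard_occupants_reassign_le hM hinj hroom⟩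
  · rintro p (⟨hp, -⟩ | ⟨hpT, hpf⟩)
    · exact hM.1 p hp
    · exact hpf ▸ hadj p.1 hpT
  · rintro p (⟨hp, hpT⟩ | ⟨hpT, hpf⟩) q (⟨hq, hqT⟩ | ⟨hqT, hqf⟩) hpq
    · exact hM.2.1 p hp q hq hpq
    · exact absurd (hpq ▸ hqT) hpT
    · exact absurd (hpq ▸ hpT) hqT
    · exact Prod.ext hpq (by rw [hpf, hqf, hpq])

theorem prefers_reassign (hM : I.IsMatching M) {a : A} {x : H} (haT : a ∈ T) (hax : (a, x) ∈ M)
    (hlt : I.rank a (f a) < I.rank a x) : I.Prefers (reassign M T f) M a :=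
  ⟨f a, Or.inr ⟨haT, rfl⟩, fun _ hy => hM.snd_eq hax hy ▸ hlt⟩

theorem not_prefers_reassign_of_notMem {a : A} (haT : a ∉ T) :
    ¬ I.Prefers M (reassign M T f) a := fun ⟨x, hx, hlt⟩ =>
  (hlt x (Or.inl ⟨hx, haT⟩)).false

theorem IsPopular.ncard_le_of_reassign [Fintype A] (hM : I.IsPopular M) {G : Set A}
    (hGT : G ⊆ T) (hadj : ∀ a ∈ T, I.adj a (f a)) (hinj : T.InjOn f)
    (hroom : ∀ a ∈ T, {e | (e, f a) ∈ M}.ncard < I.cap (f a) ∨ ∃ a' ∈ T, (a', f a) ∈ M)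
    (hgain : ∀ a ∈ G, ∃ x, (a, x) ∈ M ∧ I.rank a (f a) < I.rank a x) :
    G.ncard ≤ (T \ G).ncard := by
  have hG : G ⊆ {a | I.Prefers (reassign M T f) M a} := fun a ha =>
    let ⟨_, hax, hlt⟩ := hgain a ha
    prefers_reassign hM.1 (hGT ha) hax hlt
  have hL : {a | I.Prefers M (reassign M T f) a} ⊆ T \ G := fun a ha =>
    ⟨by_contra fun haT => not_prefers_reassign_of_notMem haT ha,
      fun haG => (hG haG).not_prefers ha⟩
  have hpop := hM.2 _ (hM.1.reassign hadj hinj hroom)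
  rw [MorePopular, not_lt, Nat.card_coe_set_eq, Nat.card_coe_set_eq] at hpop
  exact (Set.ncard_le_ncard hG).trans (hpop.trans (Set.ncard_le_ncard hL))

variable {b c d : A} {x y z : H}

theorem IsPopular.cap_le_of_rank_lt [Fintype A] (hM : I.IsPopular M) (hbx : (b, x) ∈ M)
    (hby : I.adj b y) (hb : I.rank b y < I.rank b x) : I.cap y ≤ {e | (e, y) ∈ M}.ncard := by
  by_contra! hroom
  have := hM.ncard_le_of_reassign (T := {b}) (G := {b}) (f := fun _ => y) subset_rfl
    (by simpa using hby) (Set.injOn_singleton _ _) (by simpa using Or.inl hroom)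
    (by simpa using ⟨x, hbx, hb⟩)
  simp at this

theorem IsPopular.rank_le_of_swap [Fintype A] (hM : I.IsPopular M) (hbx : (b, x) ∈ M)
    (hcy : (c, y) ∈ M) (hby : I.adj b y) (hcx : I.adj c x) (hb : I.rank b y < I.rank b x) :
    I.rank c y ≤ I.rank c x := by
  classical
  by_contra! hc
  have hxy : x ≠ y := by rintro rfl; exact hb.false
  have hbc : b ≠ c := by rintro rfl; exact hxy (hM.1.snd_eq hbx hcy)
  have := hM.ncard_le_of_reassign (T := {b, c}) (G := {b, c})
    (f := fun e => if e = b then y else x) subset_rfl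
    (by rintro a (rfl | rfl) <;> simp [hbc.symm, hby, hcx])
    (by rintro a (rfl | rfl) a' (rfl | rfl) <;> simp [hbc.symm, hxy, hxy.symm])
    (by rintro a (rfl | rfl) <;> simp [hbc.symm, hbx, hcy])
    (by rintro a (rfl | rfl); exacts [⟨x, hbx, by simpa⟩, ⟨y, hcy, by simpa [hbc.symm]⟩])
  simp [Set.ncard_pair hbc] at this

theorem IsPopular.rank_le_of_chain [Fintype A] (hM : I.IsPopular M) (hbx : (b, x) ∈ M)
    (hcy : (c, y) ∈ M) (hdz : (d, z) ∈ M) (hdb : d ≠ b) (hby : I.adj b y) (hcz : I.adj c z)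
    (hb : I.rank b y < I.rank b x) : I.rank c y ≤ I.rank c z := by
  classical
  by_contra! hc
  have hxy : x ≠ y := by rintro rfl; exact hb.false
  have hyz : y ≠ z := by rintro rfl; exact hc.false
  have hbc : b ≠ c := by rintro rfl; exact hxy (hM.1.snd_eq hbx hcy)
  have hcd : c ≠ d := by rintro rfl; exact hyz (hM.1.snd_eq hcy hdz)
  have hly : I.lastResort d ≠ y := fun h => hcd (I.lastResort_only d c (h ▸ hM.1.1 _ hcy))
  have hlz : I.lastResort d ≠ z := fun h => hcd (I.lastResort_only d c (h ▸ hcz))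
  have hfree : {e | (e, I.lastResort d) ∈ M}.ncard < I.cap (I.lastResort d) := by
    rw [I.lastResort_cap, Nat.lt_one_iff, Set.ncard_eq_zero, Set.eq_empty_iff_forall_notMem]
    intro e he
    obtain rfl := I.lastResort_only d e (hM.1.1 _ he)
    exact hlz (hM.1.snd_eq he hdz)
  -- `b` takes `c`'s house, `c` takes `d`'s house and `d` falls back to its last resort.
  set f : A → H := fun e => if e = b then y else if e = c then z else I.lastResort e
  have hfb : f b = y := if_pos rfl
  have hfc : f c = z := by simp [f, hbc.symm]
  have hfd : f d = I.lastResort d := by simp [f, hdb, hcd.symm]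
  have := hM.ncard_le_of_reassign (T := {b, c, d}) (G := {b, c}) (f := f)
    (by simp [Set.insert_subset_iff])
    (by rintro a (rfl | rfl | rfl) <;> simp [hfb, hfc, hfd, hby, hcz, I.lastResort_adj])
    (by rintro a (rfl | rfl | rfl) a' (rfl | rfl | rfl) <;>
      simp [hfb, hfc, hfd, hyz, hly, hlz, hyz.symm, hly.symm, hlz.symm])
    (by rintro a (rfl | rfl | rfl) <;> simp [hfb, hfc, hfd, hcy, hdz, hfree])
    (by rintro a (rfl | rfl); exacts [⟨x, hbx, hfb ▸ hb⟩, ⟨y, hcy, hfc ▸ hc⟩])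
  have hTG : ({b, c, d} \ {b, c} : Set A) = {d} := by
    ext e; simp only [Set.mem_sdiff, Set.mem_insert_iff, Set.mem_singleton_iff]; grind
  rw [hTG, Set.ncard_pair hbc, Set.ncard_singleton] at this
  omega

theorem IsPopular.isFirstChoice_of_rank_lt [Fintype A] (hM : I.IsPopular M)
    (hbx : (b, x) ∈ M) (hby : I.adj b y) (hb : I.rank b y < I.rank b x) (hcy : (c, y) ∈ M) :
    I.IsFirstChoice c y := by
  refine ⟨hM.1.1 _ hcy, fun z hcz => ?_⟩
  by_contra! hc
  obtain ⟨d, hdz⟩ := Set.nonempty_of_ncard_ne_zero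
    ((hM.cap_le_of_rank_lt hcy hcz hc).trans_lt' (I.cap_pos z)).ne'
  rcases eq_or_ne d b with rfl | hdb
  · obtain rfl := hM.1.snd_eq hbx hdz
    exact hc.not_ge (hM.rank_le_of_swap hbx hcy hby hcz hb)
  · exact hc.not_ge (hM.rank_le_of_chain hbx hcy hdz hdb hby hcz hb)

theorem IsPopular.rank_le_of_sCond [Fintype A] (hM : I.IsPopular M) (hbx : (b, x) ∈ M)
    (hby : I.adj b y) (hsc : I.SCond b y) : I.rank b x ≤ I.rank b y := by
  by_contra! hb
  obtain ⟨c, hcy, hcf⟩ :=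
    exists_mem_not_isFirstChoice_of_sCond hsc (hM.cap_le_of_rank_lt hbx hby hb)
  exact hcf (hM.isFirstChoice_of_rank_lt hbx hby hb hcy)

end CHAInstance

open CHAInstance in
theorem switchingGraph_saturated_no_incoming_minusOne_general
    {A H : Type*} [Fintype A] (I : CHAInstance A H)
    (M : Set (A × H)) (hM : IsPopular I M) (h : H)
    (hsat : Saturated I M h)
    (hout : ∀ (a : A) (tgt : H) (w : ℤ), SwEdge I M a h tgt w → w = -1) :
    ∀ (a : A) (src : H), ¬ SwEdge I M a src h (-1) := by
  rintro a src ⟨-, ⟨-, ⟨-, hsc, -⟩, -⟩ | ⟨-, -, hw⟩⟩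
  · have hfull : I.cap h ≤ {e | (e, h) ∈ M}.ncard := Nat.sub_eq_zero_iff_le.mp hsat
    obtain ⟨b, hbh, hbf⟩ := exists_mem_not_isFirstChoice_of_sCond hsc hfull
    have hsec : I.IsSecondChoice b h := ⟨hM.1.1 _ hbh, hsc.of_not_isFirstChoice hbf,
      fun _ hby hscy => hM.rank_le_of_sCond hbh hby hscy⟩
    obtain ⟨g, hg⟩ := I.exists_isFirstChoice b
    exact absurd (hout b g 1 ⟨hbh, Or.inr ⟨hsec, hg, rfl⟩⟩) (by norm_num)
  · norm_num at hw

open CHAInstance in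
/-- Property 4: in the switching graph of a CHA instance with respect to
a popular matching `M`, if a saturated vertex `h` has all outgoing edges of weight
`-1`, then `h` has no incoming edge of weight `-1`. -/
theorem switchingGraph_saturated_no_incoming_minusOne
    {A H : Type*} [Fintype A] [Fintype H] (I : CHAInstance A H)
    (M : Set (A × H)) (hM : IsPopular I M) (h : H)
    (hsat : Saturated I M h)
    (hout : ∀ (a : A) (tgt : H) (w : ℤ), SwEdge I M a h tgt w → w = -1) :
    ∀ (a : A) (src : H), ¬ SwEdge I M a src h (-1) :=
  switchingGraph_saturated_no_incoming_minusOne_general I M hM h hsat hout
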